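/- arXiv:2209.11188 — 2 statements merged into one kernel-verified Lean document; each statement's English description precedes it below -/
import Mathlib

section
/- Let k ≥ 1, r₀ > 0, and let w : [r₀,∞) → ℂ be continuous with ∫_{r₀}^∞ s^{|k|+1}|w(s)| ds < ∞ and ∫_{r₀}^∞ s^{-|k|+1}|w(s)| ds < ∞. Define v_r(r) = (i r^{-k-1}/2) ∫_{r₀}^r s^{k+1} w(s) ds + (i r^{k-1}/2) ∫_r^∞ s^{-k+1} w(s) ds and v_φ(r) = (r^{-k-1}/2) ∫_{r₀}^r s^{k+1} w(s) ds − (r^{k-1}/2) ∫_r^∞ s^{-k+1} w(s) ds. Then (1/r)(r v_r(r))' + (ik/r) v_φ(r) = 0 and (1/r)(r v_φ(r))' − (ik/r) v_r(r) = w(r) for all r > r₀. -/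
/-!
With `A ρ = ∫_{r₀}^ρ s^{k+1} w` and `B ρ = ∫_ρ^∞ s^{1-k} w` one has
`r v_r = (i/2) (r^{-k} A + r^k B)` and `r v_φ = (1/2) (r^{-k} A - r^k B)`.
By the fundamental theorem of calculus `(r^{-k} A)' = r w - k r^{-k-1} A` and
`(r^k B)' = k r^{k-1} B - r w`, so the `w`-terms cancel in `(r v_r)'` and add up to `2 r w` in
`(r v_φ)'`; what remains is the identity `i² = -1`.
-/

open MeasureTheory Set Filter Topology

section IntegralDerivatives

variable {E : Type*} [NormedAddCommGroup E] [NormedSpace ℝ E] [CompleteSpace E]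
  {f : ℝ → E} {a r : ℝ}

theorem hasDerivAt_integral_Ioo_right (hf : ContinuousOn f (Ici a)) (hr : a < r) :
    HasDerivAt (fun ρ => ∫ s in Ioo a ρ, f s) (f r) r := by
  have hFTC : HasDerivAt (fun ρ => ∫ s in a..ρ, f s) (f r) r :=
    intervalIntegral.integral_hasDerivAt_right
      ((hf.mono Icc_subset_Ici_self).intervalIntegrable_of_Icc hr.le)
      ((hf.mono Ioi_subset_Ici_self).stronglyMeasurableAtFilter isOpen_Ioi r hr)
      (hf.continuousAt (Ici_mem_nhds hr))
  refine hFTC.congr_of_eventuallyEq ?_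
  filter_upwards [Ioi_mem_nhds hr] with ρ hρ
  rw [intervalIntegral.integral_of_le hρ.le, integral_Ioc_eq_integral_Ioo]

theorem hasDerivAt_integral_Ioi (hfi : IntegrableOn f (Ioi a)) (hr : a < r)
    (hf : ContinuousAt f r) :
    HasDerivAt (fun ρ => ∫ s in Ioi ρ, f s) (-f r) r := by
  have hFTC : HasDerivAt (fun ρ => (∫ s in Ioi a, f s) - ∫ s in a..ρ, f s) (-f r) r :=
    (intervalIntegral.integral_hasDerivAt_right
      ((intervalIntegrable_iff_integrableOn_Ioc_of_le hr.le).2 (hfi.mono_set Ioc_subset_Ioi_self))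
      ⟨Ioi a, Ioi_mem_nhds hr, hfi.aestronglyMeasurable⟩ hf).const_sub _
  refine hFTC.congr_of_eventuallyEq ?_
  filter_upwards [Ioi_mem_nhds hr] with ρ hρ
  rw [← intervalIntegral.integral_Ioi_sub_Ioi hfi hρ.le, sub_sub_cancel]

end IntegralDerivatives

theorem ContinuousOn.ofReal_zpow_mul {w : ℝ → ℂ} {S : Set ℝ} (hw : ContinuousOn w S)
    (hS : ∀ s ∈ S, s ≠ 0) (n : ℤ) : ContinuousOn (fun s : ℝ => (s : ℂ) ^ n * w s) S :=
  ((Complex.continuous_ofReal.continuousOn).zpow₀ n fun s hs =>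
    Or.inl (Complex.ofReal_ne_zero.2 (hS s hs))).mul hw

theorem integrableOn_ofReal_zpow_mul {w : ℝ → ℂ} {a : ℝ} {n : ℤ} (ha : 0 ≤ a)
    (hw : ContinuousOn w (Ioi a)) (h : IntegrableOn (fun s : ℝ => s ^ n * ‖w s‖) (Ioi a)) :
    IntegrableOn (fun s : ℝ => (s : ℂ) ^ n * w s) (Ioi a) := by
  have hmeas : AEStronglyMeasurable (fun s : ℝ => (s : ℂ) ^ n * w s) (volume.restrict (Ioi a)) :=
    (hw.ofReal_zpow_mul (fun s hs => (ha.trans_lt hs).ne') n).aestronglyMeasurable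
      measurableSet_Ioi
  refine (integrable_norm_iff hmeas).1 (h.congr_fun (fun s hs => ?_) measurableSet_Ioi)
  rw [norm_mul, norm_zpow, Complex.norm_real, Real.norm_of_nonneg (ha.trans hs.le)]

theorem self_mul_zpow_sub_one₀ {G₀ : Type*} [GroupWithZero G₀] {a : G₀} (ha : a ≠ 0) (n : ℤ) :
    a * a ^ (n - 1) = a ^ n := by
  rw [← zpow_one_add₀ ha, add_sub_cancel]

section FourierMode

variable {k : ℤ} {w F : ℝ → ℂ} {r : ℝ}

theorem hasDerivAt_ofReal_zpow_mul {F' : ℂ} (n : ℤ) (hr : r ≠ 0) (hF : HasDerivAt F F' r) :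
    HasDerivAt (fun ρ : ℝ => (ρ : ℂ) ^ n * F ρ)
      (n * (r : ℂ) ^ (n - 1) * F r + (r : ℂ) ^ n * F') r :=
  (hasDerivAt_zpow n (r : ℂ) (Or.inl (Complex.ofReal_ne_zero.2 hr))).comp_ofReal.mul hF

theorem hasDerivAt_ofReal_zpow_neg_mul_of_hasDerivAt (hr : r ≠ 0)
    (hF : HasDerivAt F ((r : ℂ) ^ (k + 1) * w r) r) :
    HasDerivAt (fun ρ : ℝ => (ρ : ℂ) ^ (-k) * F ρ)
      (r * w r - k * (r : ℂ) ^ (-k - 1) * F r) r := by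
  refine (hasDerivAt_ofReal_zpow_mul (-k) hr hF).congr_deriv ?_
  rw [← mul_assoc, ← zpow_add₀ (Complex.ofReal_ne_zero.2 hr), neg_add_cancel_left, zpow_one]
  push_cast
  ring

theorem hasDerivAt_ofReal_zpow_mul_of_hasDerivAt_neg (hr : r ≠ 0)
    (hF : HasDerivAt F (-((r : ℂ) ^ (-k + 1) * w r)) r) :
    HasDerivAt (fun ρ : ℝ => (ρ : ℂ) ^ k * F ρ)
      (k * (r : ℂ) ^ (k - 1) * F r - r * w r) r := by
  refine (hasDerivAt_ofReal_zpow_mul k hr hF).congr_deriv ?_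
  rw [mul_neg, ← mul_assoc, ← zpow_add₀ (Complex.ofReal_ne_zero.2 hr), add_neg_cancel_left,
    zpow_one]
  ring

theorem fourier_mode_system_of_hasDerivAt {A B vr vφ : ℝ → ℂ} (hr : r ≠ 0)
    (hA : HasDerivAt A ((r : ℂ) ^ (k + 1) * w r) r)
    (hB : HasDerivAt B (-((r : ℂ) ^ (-k + 1) * w r)) r)
    (hvr : ∀ ρ : ℝ, vr ρ = (Complex.I * (ρ : ℂ) ^ (-k - 1) / 2) * A ρ
      + (Complex.I * (ρ : ℂ) ^ (k - 1) / 2) * B ρ)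
    (hvφ : ∀ ρ : ℝ, vφ ρ = ((ρ : ℂ) ^ (-k - 1) / 2) * A ρ - ((ρ : ℂ) ^ (k - 1) / 2) * B ρ) :
    (1 / (r : ℂ)) * deriv (fun ρ : ℝ => (ρ : ℂ) * vr ρ) r
        + (Complex.I * (k : ℂ) / (r : ℂ)) * vφ r = 0 ∧
      (1 / (r : ℂ)) * deriv (fun ρ : ℝ => (ρ : ℂ) * vφ ρ) r
        - (Complex.I * (k : ℂ) / (r : ℂ)) * vr r = w r := by
  have hP := hasDerivAt_ofReal_zpow_neg_mul_of_hasDerivAt hr hA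
  have hQ := hasDerivAt_ofReal_zpow_mul_of_hasDerivAt_neg hr hB
  have hnear : ∀ᶠ ρ : ℝ in 𝓝 r, (ρ : ℂ) * (ρ : ℂ) ^ (-k - 1) = (ρ : ℂ) ^ (-k) ∧
      (ρ : ℂ) * (ρ : ℂ) ^ (k - 1) = (ρ : ℂ) ^ k := by
    filter_upwards [eventually_ne_nhds hr] with ρ hρ
    exact ⟨self_mul_zpow_sub_one₀ (Complex.ofReal_ne_zero.2 hρ) _,
      self_mul_zpow_sub_one₀ (Complex.ofReal_ne_zero.2 hρ) _⟩
  have hdr : deriv (fun ρ : ℝ => (ρ : ℂ) * vr ρ) r = Complex.I / 2 * (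
      (r * w r - k * (r : ℂ) ^ (-k - 1) * A r) + (k * (r : ℂ) ^ (k - 1) * B r - r * w r)) := by
    refine (((hP.add hQ).const_mul (Complex.I / 2)).congr_of_eventuallyEq ?_).deriv
    filter_upwards [hnear] with ρ ⟨h₁, h₂⟩
    rw [hvr ρ, Pi.add_apply]
    linear_combination (Complex.I / 2 * A ρ) * h₁ + (Complex.I / 2 * B ρ) * h₂
  have hdφ : deriv (fun ρ : ℝ => (ρ : ℂ) * vφ ρ) r = 1 / 2 * (
      (r * w r - k * (r : ℂ) ^ (-k - 1) * A r) - (k * (r : ℂ) ^ (k - 1) * B r - r * w r)) := by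
    refine (((hP.sub hQ).const_mul (1 / 2)).congr_of_eventuallyEq ?_).deriv
    filter_upwards [hnear] with ρ ⟨h₁, h₂⟩
    rw [hvφ ρ, Pi.sub_apply]
    linear_combination (A ρ / 2) * h₁ - (B ρ / 2) * h₂
  have hr' : (r : ℂ) ≠ 0 := Complex.ofReal_ne_zero.2 hr
  constructor
  · rw [hdr, hvφ r]
    ring
  · rw [hdφ, hvr r]
    field_simp
    linear_combination (-k * ((r : ℂ) ^ (-k - 1) * A r + (r : ℂ) ^ (k - 1) * B r)) * Complex.I_sq

end FourierMode

theorem biot_savart_fourier_mode_solves_system_general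
    (k : ℤ) (r₀ : ℝ) (hr₀ : 0 < r₀) (w : ℝ → ℂ)
    (hw : ContinuousOn w (Ici r₀))
    (h2 : IntegrableOn (fun s : ℝ => s ^ (-k + 1) * ‖w s‖) (Ioi r₀))
    (vr vφ : ℝ → ℂ)
    (hvr : ∀ r : ℝ, vr r
      = (Complex.I * (r : ℂ) ^ (-k - 1) / 2) * (∫ s in Ioo r₀ r, (s : ℂ) ^ (k + 1) * w s)
        + (Complex.I * (r : ℂ) ^ (k - 1) / 2) * (∫ s in Ioi r, (s : ℂ) ^ (-k + 1) * w s))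
    (hvφ : ∀ r : ℝ, vφ r
      = ((r : ℂ) ^ (-k - 1) / 2) * (∫ s in Ioo r₀ r, (s : ℂ) ^ (k + 1) * w s)
        - ((r : ℂ) ^ (k - 1) / 2) * (∫ s in Ioi r, (s : ℂ) ^ (-k + 1) * w s)) :
    ∀ r : ℝ, r₀ < r →
      (1 / (r : ℂ)) * deriv (fun ρ : ℝ => (ρ : ℂ) * vr ρ) r
          + (Complex.I * (k : ℂ) / (r : ℂ)) * vφ r = 0 ∧
      (1 / (r : ℂ)) * deriv (fun ρ : ℝ => (ρ : ℂ) * vφ ρ) r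
          - (Complex.I * (k : ℂ) / (r : ℂ)) * vr r = w r := by
  intro r hr
  have hcont := hw.ofReal_zpow_mul fun s hs => (hr₀.trans_le hs).ne'
  have hA : HasDerivAt (fun ρ => ∫ s : ℝ in Ioo r₀ ρ, (s : ℂ) ^ (k + 1) * w s)
      ((r : ℂ) ^ (k + 1) * w r) r :=
    hasDerivAt_integral_Ioo_right (hcont _) hr
  have hB : HasDerivAt (fun ρ => ∫ s : ℝ in Ioi ρ, (s : ℂ) ^ (-k + 1) * w s)
      (-((r : ℂ) ^ (-k + 1) * w r)) r :=
    hasDerivAt_integral_Ioi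
      (integrableOn_ofReal_zpow_mul hr₀.le (hw.mono Ioi_subset_Ici_self) h2) hr
      ((hcont _).continuousAt (Ici_mem_nhds hr))
  exact fourier_mode_system_of_hasDerivAt (hr₀.trans hr).ne' hA hB hvr hvφ

theorem biot_savart_fourier_mode_solves_system
    (k : ℤ) (hk : 1 ≤ k) (r₀ : ℝ) (hr₀ : 0 < r₀) (w : ℝ → ℂ)
    (hw : ContinuousOn w (Ici r₀))
    (h1 : IntegrableOn (fun s : ℝ => s ^ (k + 1) * ‖w s‖) (Ioi r₀))
    (h2 : IntegrableOn (fun s : ℝ => s ^ (-k + 1) * ‖w s‖) (Ioi r₀))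
    (vr vφ : ℝ → ℂ)
    (hvr : ∀ r : ℝ, vr r
      = (Complex.I * (r : ℂ) ^ (-k - 1) / 2) * (∫ s in Ioo r₀ r, (s : ℂ) ^ (k + 1) * w s)
        + (Complex.I * (r : ℂ) ^ (k - 1) / 2) * (∫ s in Ioi r, (s : ℂ) ^ (-k + 1) * w s))
    (hvφ : ∀ r : ℝ, vφ r
      = ((r : ℂ) ^ (-k - 1) / 2) * (∫ s in Ioo r₀ r, (s : ℂ) ^ (k + 1) * w s)
        - ((r : ℂ) ^ (k - 1) / 2) * (∫ s in Ioi r, (s : ℂ) ^ (-k + 1) * w s)) :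
    ∀ r : ℝ, r₀ < r →
      (1 / (r : ℂ)) * deriv (fun ρ : ℝ => (ρ : ℂ) * vr ρ) r
          + (Complex.I * (k : ℂ) / (r : ℂ)) * vφ r = 0 ∧
      (1 / (r : ℂ)) * deriv (fun ρ : ℝ => (ρ : ℂ) * vφ ρ) r
          - (Complex.I * (k : ℂ) / (r : ℂ)) * vr r = w r :=
  biot_savart_fourier_mode_solves_system_general k r₀ hr₀ w hw h2 vr vφ hvr hvφ
end

section
/- Let Φ⁻¹ be holomorphic on {|z| > r₀} with expansion Φ⁻¹(z) = z + Σ_{n≥1} b_n z^{-n} absolutely convergent for |z| > r₀, and suppose (Φ⁻¹)'(z) = Σ_{n≥0} c_n z^{-n} with Σ|c_n| r₀^{-n} < ∞. If w(t,·) ∈ L¹(B_{r₀}) depends continuously differentiably on t and for every m ≥ 1 the moments ∫_{B_{r₀}} conj((Φ⁻¹)'(z)) w(t,x)/z^m dx are constant in t, then for every k ≥ 1 the weighted moment ∫_{B_{r₀}} |(Φ⁻¹)'(z)|² w(t,x)/z^k dx is also constant in t. -/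
/-!
Expanding `g = ∑ cₙ z⁻ⁿ` turns the weighted moment `∫ g ḡ w z⁻ᵏ` into `∑ cₙ ∫ ḡ w z⁻⁽ᵏ⁺ⁿ⁾`, a
series of the moments assumed constant in time. The interchange of sum and integral is justified
by the bound `‖cₙ z⁻ⁿ‖ ≤ ‖cₙ‖ r₀⁻ⁿ` on `{r₀ < ‖z‖}`, which is summable.
-/

open MeasureTheory

section InversePowerSeries

variable {μ : Measure ℂ} {r : ℝ} {f : ℂ → ℂ}

lemma norm_inv_pow_le_of_lt_norm (hr : 0 < r) {z : ℂ} (hz : r < ‖z‖) (n : ℕ) :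
    ‖(z ^ n)⁻¹‖ ≤ (r ^ n)⁻¹ := by
  rw [norm_inv, norm_pow]
  exact inv_anti₀ (pow_pos hr n) (pow_le_pow_left₀ hr.le hz.le n)

lemma MeasureTheory.Integrable.div_pow_of_ae_lt_norm (hr : 0 < r) (hμ : ∀ᵐ z ∂μ, r < ‖z‖)
    (hf : Integrable f μ) (n : ℕ) : Integrable (fun z => f z / z ^ n) μ := by
  simp only [div_eq_mul_inv]
  exact hf.mul_bdd (by fun_prop) (hμ.mono fun z hz => norm_inv_pow_le_of_lt_norm hr hz n)

theorem integral_tsum_div_pow_mul (hr : 0 < r) {c : ℕ → ℂ}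
    (hc : Summable fun n => ‖c n‖ / r ^ n) (hμ : ∀ᵐ z ∂μ, r < ‖z‖) (hf : Integrable f μ) :
    ∫ z, (∑' n, c n / z ^ n) * f z ∂μ = ∑' n, c n * ∫ z, f z / z ^ n ∂μ := by
  have hterm : ∀ n, Integrable (fun z => c n * (f z / z ^ n)) μ := fun n =>
    (hf.div_pow_of_ae_lt_norm hr hμ n).const_mul (c n)
  have hterm_le : ∀ n, ∀ᵐ z ∂μ, ‖c n * (f z / z ^ n)‖ ≤ ‖c n‖ / r ^ n * ‖f z‖ := fun n =>
    hμ.mono fun z hz => by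
      rw [norm_mul, div_eq_mul_inv, norm_mul, div_eq_mul_inv, mul_comm ‖f z‖, ← mul_assoc]
      gcongr
      exact norm_inv_pow_le_of_lt_norm hr hz n
  have hsum : Summable fun n => ∫ z, ‖c n * (f z / z ^ n)‖ ∂μ := by
    refine (hc.mul_right (∫ z, ‖f z‖ ∂μ)).of_nonneg_of_le
      (fun n => integral_nonneg fun z => norm_nonneg _) fun n => ?_
    rw [← integral_const_mul]
    exact integral_mono_ae (hterm n).norm (hf.norm.const_mul _) (hterm_le n)
  calc ∫ z, (∑' n, c n / z ^ n) * f z ∂μ = ∫ z, ∑' n, c n * (f z / z ^ n) ∂μ := by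
        refine integral_congr_ae (.of_forall fun z => ?_)
        simp only [← tsum_mul_right, mul_div_assoc', div_mul_eq_mul_div]
    _ = ∑' n, c n * ∫ z, f z / z ^ n ∂μ := by
        rw [← integral_tsum_of_summable_integral_norm hterm hsum]
        exact tsum_congr fun n => integral_const_mul _ _

end InversePowerSeries

theorem weighted_moment_invariance_riemann_mapping_general
    (r₀ : ℝ) (hr₀ : 0 < r₀)
    (c : ℕ → ℂ) (g : ℂ → ℂ)
    (hc : Summable (fun n : ℕ => ‖c n‖ / r₀ ^ n))
    (hg : ∀ z : ℂ, r₀ < ‖z‖ → g z = ∑' n : ℕ, c n / z ^ n)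
    (w : ℝ → ℂ → ℂ)
    (hmomint : ∀ (t : ℝ) (m : ℕ), 1 ≤ m →
      IntegrableOn (fun z : ℂ => (starRingEnd ℂ) (g z) * w t z / z ^ m)
        {z : ℂ | r₀ < ‖z‖})
    (hconst : ∀ (m : ℕ), 1 ≤ m → ∀ t s : ℝ,
      ∫ z in {z : ℂ | r₀ < ‖z‖}, (starRingEnd ℂ) (g z) * w t z / z ^ m
        = ∫ z in {z : ℂ | r₀ < ‖z‖}, (starRingEnd ℂ) (g z) * w s z / z ^ m) :
    ∀ (k : ℕ), 1 ≤ k → ∀ t s : ℝ,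
      ∫ z in {z : ℂ | r₀ < ‖z‖}, g z * (starRingEnd ℂ) (g z) * w t z / z ^ k
        = ∫ z in {z : ℂ | r₀ < ‖z‖}, g z * (starRingEnd ℂ) (g z) * w s z / z ^ k := by
  intro k hk t s
  have hS : MeasurableSet {z : ℂ | r₀ < ‖z‖} := measurableSet_lt measurable_const measurable_norm
  have expand : ∀ τ, ∫ z in {z : ℂ | r₀ < ‖z‖}, g z * (starRingEnd ℂ) (g z) * w τ z / z ^ k
      = ∑' n, c n * ∫ z in {z : ℂ | r₀ < ‖z‖}, (starRingEnd ℂ) (g z) * w τ z / z ^ (k + n) := by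
    intro τ
    calc _ = ∫ z in {z : ℂ | r₀ < ‖z‖},
          (∑' n, c n / z ^ n) * ((starRingEnd ℂ) (g z) * w τ z / z ^ k) :=
          setIntegral_congr_fun hS fun z hz => by rw [← hg z hz]; ring
      _ = _ := by
          rw [integral_tsum_div_pow_mul hr₀ hc (ae_restrict_of_forall_mem hS fun z hz => hz) (hmomint τ k hk)]
          simp only [div_div, ← pow_add]
  rw [expand t, expand s]
  exact tsum_congr fun n => by rw [hconst (k + n) (by omega)]

theorem weighted_moment_invariance_riemann_mapping
    (r₀ : ℝ) (hr₀ : 0 < r₀)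
    (c : ℕ → ℂ) (g : ℂ → ℂ)
    (hc : Summable (fun n : ℕ => ‖c n‖ / r₀ ^ n))
    (hg : ∀ z : ℂ, r₀ < ‖z‖ → g z = ∑' n : ℕ, c n / z ^ n)
    (w : ℝ → ℂ → ℂ)
    (hwt : ∀ z : ℂ, ContDiff ℝ 1 (fun t : ℝ => w t z))
    (hwint : ∀ t : ℝ, IntegrableOn (w t) {z : ℂ | r₀ < ‖z‖})
    (hmomint : ∀ (t : ℝ) (m : ℕ), 1 ≤ m →
      IntegrableOn (fun z : ℂ => (starRingEnd ℂ) (g z) * w t z / z ^ m)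
        {z : ℂ | r₀ < ‖z‖})
    (hwgint : ∀ (t : ℝ) (k : ℕ), 1 ≤ k →
      IntegrableOn (fun z : ℂ => g z * (starRingEnd ℂ) (g z) * w t z / z ^ k)
        {z : ℂ | r₀ < ‖z‖})
    (hconst : ∀ (m : ℕ), 1 ≤ m → ∀ t s : ℝ,
      ∫ z in {z : ℂ | r₀ < ‖z‖}, (starRingEnd ℂ) (g z) * w t z / z ^ m
        = ∫ z in {z : ℂ | r₀ < ‖z‖}, (starRingEnd ℂ) (g z) * w s z / z ^ m) :
    ∀ (k : ℕ), 1 ≤ k → ∀ t s : ℝ,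
      ∫ z in {z : ℂ | r₀ < ‖z‖}, g z * (starRingEnd ℂ) (g z) * w t z / z ^ k
        = ∫ z in {z : ℂ | r₀ < ‖z‖}, g z * (starRingEnd ℂ) (g z) * w s z / z ^ k :=
  weighted_moment_invariance_riemann_mapping_general r₀ hr₀ c g hc hg w hmomint hconst
end
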